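/- Let f : X → X be a minimal continuous self-map of a compact metric space such that every point of X is regularly recurrent. Then X is a periodic orbit or an odometer (i.e., f is topologically conjugate to an odometer). -/

import Mathlib

open Filter Topology Metric Set

/-- A periodic structure: a sequence of positive integers with `m j ∣ m (j+1)` and `m j → ∞`. -/
structure PeriodicStructure where
  m : ℕ → ℕ
  pos : ∀ j, 0 < m j
  dvd : ∀ j, m j ∣ m (j + 1)
  tendsto : Filter.Tendsto m Filter.atTop Filter.atTop

/-- The odometer space `X_m` of a periodic structure. -/
def PeriodicStructure.space (p : PeriodicStructure) : Type :=
  {x : ℕ → ℕ // ∀ j, x j < p.m j ∧ x (j + 1) % p.m j = x j}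

instance (p : PeriodicStructure) : TopologicalSpace p.space :=
  inferInstanceAs (TopologicalSpace
    {x : ℕ → ℕ // ∀ j, x j < p.m j ∧ x (j + 1) % p.m j = x j})

/-- The odometer map `g_m` (adding 1 coordinatewise mod `m j`). -/
def PeriodicStructure.step (p : PeriodicStructure) (x : p.space) : p.space :=
  ⟨fun j => (x.1 j + 1) % p.m j, by
    intro j
    refine ⟨Nat.mod_lt _ (p.pos j), ?_⟩
    show (x.1 (j + 1) + 1) % p.m (j + 1) % p.m j = (x.1 j + 1) % p.m j
    rw [Nat.mod_mod_of_dvd _ (p.dvd j), ← (x.2 j).2, Nat.add_mod]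
    exact Nat.add_mod_mod _ _ _⟩

/-- `S` is an odometer for `f`: `f` restricted to `S` is topologically conjugate to
an odometer `g_m : X_m → X_m`. -/
def IsOdometer {X : Type*} [TopologicalSpace X] (f : X → X) (S : Set X) : Prop :=
  ∃ p : PeriodicStructure, ∃ h : p.space ≃ₜ S,
    ∀ z : p.space, f ((h z : X)) = ((h (p.step z) : X))

/-- `S` is a periodic orbit of `f`. -/
def IsPeriodicOrbit {X : Type*} (f : X → X) (S : Set X) : Prop :=
  ∃ x ∈ S, ∃ i : ℕ, 0 < i ∧ f^[i] x = x ∧ S = {y | ∃ j < i, f^[j] x = y}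

/-- The ω-limit set of a sequence of points. -/
def omegaLimitSeq {X : Type*} [TopologicalSpace X] (x : ℕ → X) : Set X :=
  {y | ∃ φ : ℕ → ℕ, StrictMono φ ∧
    Filter.Tendsto (fun j => x (φ j)) Filter.atTop (nhds y)}

/-- The ω-limit set `ω(x, f)` of a point. -/
def omegaLimitPt {X : Type*} [TopologicalSpace X] (f : X → X) (x : X) : Set X :=
  omegaLimitSeq fun i => f^[i] x

/-- `M` is a minimal set for `f`. -/
def IsMinimalSet {X : Type*} [TopologicalSpace X] (f : X → X) (M : Set X) : Prop :=
  M.Nonempty ∧ IsClosed M ∧ Set.MapsTo f M M ∧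
    ∀ S ⊆ M, IsClosed S → Set.MapsTo f S S → S = ∅ ∨ S = M

/-- `x` is a minimal point for `f`. -/
def IsMinimalPoint {X : Type*} [TopologicalSpace X] (f : X → X) (x : X) : Prop :=
  IsMinimalSet f (closure (Set.range fun i => f^[i] x))

/-- `x` is a regularly recurrent point for `f`. -/
def RegularlyRecurrent {X : Type*} [PseudoMetricSpace X] (f : X → X) (x : X) : Prop :=
  ∀ ε > 0, ∃ n : ℕ, 0 < n ∧ ∀ k : ℕ, dist x (f^[k * n] x) ≤ ε

/-- `f` has the shadowing property. -/
def ShadowingProperty {X : Type*} [PseudoMetricSpace X] (f : X → X) : Prop :=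
  ∀ ε > 0, ∃ δ > 0, ∀ ξ : ℕ → X,
    (∀ i, dist (f (ξ i)) (ξ (i + 1)) ≤ δ) → ∃ y, ∀ i, dist (f^[i] y) (ξ i) ≤ ε

/-! Write `W_m(y) = orbitClosure f^[m] y` for the closure of the `f^m`-orbit of `y`. Regular
recurrence makes `z ∈ W_m(y)` imply `y ∈ W_m(z)`, so for `m > 0` these closed sets partition `X`;
`f` maps `W_m(y)` onto `W_m(f y)`, and by minimality the classes form a single cycle, of some
length `n_m`. Regular recurrence of `y` also puts `W_n(y)` inside a small ball around `y` for
suitable `n`, so the partitions at the levels `m = j!` separate points. The positions of a point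
in these cycles form a point of the odometer with periodic structure `(n_{j!})_j`, and this coding
is a continuous bijection turning `f` into `+1`. The periods `n_{j!}` are unbounded unless `X` is
a periodic orbit, since a common period of all the classes of a point is a period of the point. -/

open Function
open scoped Nat

section Odometer

variable {X : Type*}

section OrbitClosure

variable [TopologicalSpace X]

def orbitClosure (g : X → X) (y : X) : Set X :=
  closure (range fun k => g^[k] y)

lemma isClosed_orbitClosure (g : X → X) (y : X) : IsClosed (orbitClosure g y) :=
  isClosed_closure

lemma iterate_mem_orbitClosure (g : X → X) (k : ℕ) (y : X) : g^[k] y ∈ orbitClosure g y :=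
  subset_closure ⟨k, rfl⟩

lemma mem_orbitClosure_self (g : X → X) (y : X) : y ∈ orbitClosure g y :=
  iterate_mem_orbitClosure g 0 y

lemma mapsTo_orbitClosure {g : X → X} (hg : Continuous g) (y : X) :
    MapsTo g (orbitClosure g y) (orbitClosure g y) :=
  MapsTo.closure (fun _ ⟨k, hk⟩ => ⟨k + 1, by simp only [← hk, iterate_succ_apply']⟩) hg

lemma orbitClosure_subset_of_mem {g : X → X} (hg : Continuous g) {y z : X}
    (hz : z ∈ orbitClosure g y) : orbitClosure g z ⊆ orbitClosure g y :=
  closure_minimal (range_subset_iff.2 fun k => (mapsTo_orbitClosure hg y).iterate k hz)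
    (isClosed_orbitClosure g y)

lemma orbitClosure_iterate_subset_of_dvd (g : X → X) {m m' : ℕ} (h : m ∣ m') (y : X) :
    orbitClosure g^[m'] y ⊆ orbitClosure g^[m] y := by
  obtain ⟨c, rfl⟩ := h
  exact closure_mono (range_subset_iff.2 fun k => ⟨c * k, by
    simp only [← iterate_mul, mul_assoc]⟩)

lemma image_orbitClosure [CompactSpace X] [T2Space X] {g h : X → X} (hh : Continuous h)
    (hgh : Function.Commute g h) (y : X) : h '' orbitClosure g y = orbitClosure g (h y) := by
  rw [orbitClosure, image_closure_of_isCompact isClosed_closure.isCompact hh.continuousOn,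
    ← range_comp]
  congr 2
  funext k
  exact ((hgh.iterate_left k).eq y).symm

lemma IsMinimalSet.orbitClosure_eq_univ {f : X → X} (hmin : IsMinimalSet f univ)
    (hf : Continuous f) (y : X) : orbitClosure f y = univ :=
  (hmin.2.2.2 _ (subset_univ _) (isClosed_orbitClosure f y)
    (mapsTo_orbitClosure hf y)).resolve_left (nonempty_of_mem (mem_orbitClosure_self f y)).ne_empty

lemma IsMinimalSet.isPeriodicOrbit_univ [T1Space X] {f : X → X} (hmin : IsMinimalSet f univ)
    {x : X} {i : ℕ} (hi : 0 < i) (hx : f^[i] x = x) : IsPeriodicOrbit f univ := by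
  refine ⟨x, mem_univ x, i, hi, hx, ?_⟩
  have hclosed : IsClosed {y | ∃ j < i, f^[j] x = y} :=
    ((finite_Iio i).image fun j => f^[j] x).isClosed
  have hmaps : MapsTo f {y | ∃ j < i, f^[j] x = y} {y | ∃ j < i, f^[j] x = y} := by
    rintro _ ⟨j, -, rfl⟩
    exact ⟨(j + 1) % i, Nat.mod_lt _ hi, by
      rw [IsPeriodicPt.iterate_mod_apply hx, iterate_succ_apply']⟩
  exact ((hmin.2.2.2 _ (subset_univ _) hclosed hmaps).resolve_left
    (nonempty_of_mem (s := {y | ∃ j < i, f^[j] x = y}) ⟨0, hi, rfl⟩).ne_empty).symm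

end OrbitClosure

section RegularlyRecurrent

variable [PseudoMetricSpace X] {g : X → X} {y z : X}

lemma RegularlyRecurrent.iterate (hy : RegularlyRecurrent g y) (m : ℕ) :
    RegularlyRecurrent g^[m] y := fun ε hε => by
  obtain ⟨n, hn, hret⟩ := hy ε hε
  refine ⟨n, hn, fun k => ?_⟩
  rw [← iterate_mul, show m * (k * n) = k * m * n by ring]
  exact hret (k * m)

lemma RegularlyRecurrent.mem_orbitClosure_symm (hg : Continuous g) (hy : RegularlyRecurrent g y)
    (hz : z ∈ orbitClosure g y) : y ∈ orbitClosure g z := by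
  refine Metric.mem_closure_iff.2 fun ε hε => ?_
  obtain ⟨n, hn, hret⟩ := hy (ε / 2) (half_pos hε)
  have hcont : Continuous fun u (j : Fin (n + 1)) => g^[j] u :=
    continuous_pi fun j => hg.iterate j
  obtain ⟨δ, hδ, hclose⟩ := Metric.continuous_iff.1 hcont z (ε / 2) (half_pos hε)
  obtain ⟨_, ⟨k, rfl⟩, hk⟩ := Metric.mem_closure_iff.1 hz δ hδ
  -- move `z` forward by the `j ≤ n` steps that bring `g^[k] y` back to a multiple of `n`
  let j : Fin (n + 1) := ⟨n - k % n, by omega⟩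
  have hkj : k + j = (k / n + 1) * n := by
    have := Nat.div_add_mod' k n
    have := Nat.mod_lt k hn
    simp only [j, add_one_mul]
    omega
  refine ⟨g^[j] z, ⟨j, rfl⟩, ?_⟩
  calc dist y (g^[j] z) ≤ dist y (g^[j] (g^[k] y)) + dist (g^[j] (g^[k] y)) (g^[j] z) :=
        dist_triangle _ _ _
    _ < ε / 2 + ε / 2 := by
        refine add_lt_add_of_le_of_lt ?_ ((dist_le_pi_dist _ _ j).trans_lt
          (hclose _ (by rwa [dist_comm])))
        rw [← iterate_add_apply, add_comm, hkj]
        exact hret _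
    _ = ε := add_halves ε

lemma RegularlyRecurrent.orbitClosure_eq_iff (hg : Continuous g) (hy : RegularlyRecurrent g y) :
    orbitClosure g z = orbitClosure g y ↔ z ∈ orbitClosure g y :=
  ⟨fun h => h ▸ mem_orbitClosure_self g z, fun hz => (orbitClosure_subset_of_mem hg hz).antisymm
    (orbitClosure_subset_of_mem hg (hy.mem_orbitClosure_symm hg hz))⟩

end RegularlyRecurrent

lemma RegularlyRecurrent.eq_of_forall_mem_orbitClosure_factorial [MetricSpace X] {f : X → X}
    {y z : X} (hy : RegularlyRecurrent f y) (hz : ∀ j, z ∈ orbitClosure f^[j !] y) : z = y := by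
  refine eq_of_forall_dist_le fun ε hε => ?_
  obtain ⟨n, hn, hret⟩ := hy ε hε
  have hball : orbitClosure f^[n] y ⊆ closedBall y ε :=
    closure_minimal (range_subset_iff.2 fun k => by
      rw [mem_closedBall, dist_comm, ← iterate_mul, mul_comm]
      exact hret k) isClosed_closedBall
  exact hball (orbitClosure_iterate_subset_of_dvd f (Nat.dvd_factorial hn le_rfl) y (hz n))

section OrbitIndex

variable {α : Type*} {F : α → α} {s t : α}

/-- The position of `t` on the periodic orbit of `s`, as a residue modulo the period
(`0` if `t` is not on the orbit). -/
noncomputable def orbitIndex (F : α → α) (s t : α) : ℕ :=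
  open Classical in if h : ∃ i, F^[i] s = t then h.choose % minimalPeriod F s else 0

lemma orbitIndex_lt (hs : 0 < minimalPeriod F s) (t : α) :
    orbitIndex F s t < minimalPeriod F s := by
  unfold orbitIndex
  split_ifs
  exacts [Nat.mod_lt _ hs, hs]

lemma iterate_orbitIndex (ht : ∃ i, F^[i] s = t) : F^[orbitIndex F s t] s = t := by
  rw [orbitIndex, dif_pos ht, iterate_mod_minimalPeriod_eq, ht.choose_spec]

lemma orbitIndex_eq_iff (hs : 0 < minimalPeriod F s) (ht : ∃ i, F^[i] s = t) {i : ℕ}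
    (hi : i < minimalPeriod F s) : orbitIndex F s t = i ↔ F^[i] s = t := by
  conv_rhs => rw [← iterate_orbitIndex ht]
  rw [iterate_eq_iterate_iff_of_lt_minimalPeriod hi (orbitIndex_lt hs t), eq_comm]

end OrbitIndex

section Level

variable [MetricSpace X] [CompactSpace X] {f : X → X} {x₀ : X}

lemma iterate_image_orbitClosure (hf : Continuous f) (m t : ℕ) (y : X) :
    (image f)^[t] (orbitClosure f^[m] y) = orbitClosure f^[m] (f^[t] y) := by
  rw [← image_iterate_eq, image_orbitClosure (hf.iterate t) (Commute.iterate_iterate_self f m t)]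

lemma isPeriodicPt_image_orbitClosure_iff (hf : Continuous f) {y : X}
    (hy : RegularlyRecurrent f y) (m t : ℕ) :
    IsPeriodicPt (image f) t (orbitClosure f^[m] y) ↔ f^[t] y ∈ orbitClosure f^[m] y := by
  rw [IsPeriodicPt, IsFixedPt, iterate_image_orbitClosure hf,
    (hy.iterate m).orbitClosure_eq_iff (hf.iterate m)]

lemma exists_iterate_image_orbitClosure_eq (hf : Continuous f) (hmin : IsMinimalSet f univ)
    (hrr : ∀ x, RegularlyRecurrent f x) {m : ℕ} (hm : 0 < m) (x₀ y : X) :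
    ∃ i, (image f)^[i] (orbitClosure f^[m] x₀) = orbitClosure f^[m] y := by
  have hcover : orbitClosure f x₀ ⊆ ⋃ i ∈ Iio m, orbitClosure f^[m] (f^[i] x₀) := by
    refine closure_minimal (range_subset_iff.2 fun t => mem_biUnion (Nat.mod_lt t hm) ?_)
      ((finite_Iio m).isClosed_biUnion fun i _ => isClosed_orbitClosure _ _)
    convert iterate_mem_orbitClosure f^[m] (t / m) (f^[t % m] x₀) using 1
    rw [← iterate_mul, ← iterate_add_apply, Nat.div_add_mod]
  obtain ⟨i, -, hy⟩ := mem_iUnion₂.1 (hcover (hmin.orbitClosure_eq_univ hf x₀ ▸ mem_univ y))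
  exact ⟨i, by rw [iterate_image_orbitClosure hf,
    (((hrr _).iterate m).orbitClosure_eq_iff (hf.iterate m)).2 hy]⟩

/-- When all points are regularly recurrent, the sets `orbitClosure f^[j !] y` partition `X` into
`levelPeriod f x₀ j` classes, cyclically permuted by `f`. -/
noncomputable def levelPeriod (f : X → X) (x₀ : X) (j : ℕ) : ℕ :=
  minimalPeriod (image f) (orbitClosure f^[j !] x₀)

/-- The position of the class of `y` in that cycle, counted from the class of `x₀`. -/
noncomputable def level (f : X → X) (x₀ : X) (j : ℕ) (y : X) : ℕ :=
  orbitIndex (image f) (orbitClosure f^[j !] x₀) (orbitClosure f^[j !] y)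

lemma levelPeriod_pos (hf : Continuous f) (hx₀ : RegularlyRecurrent f x₀) (j : ℕ) :
    0 < levelPeriod f x₀ j :=
  ((isPeriodicPt_image_orbitClosure_iff hf hx₀ _ _).2
    (iterate_mem_orbitClosure f^[j !] 1 x₀)).minimalPeriod_pos (Nat.factorial_pos j)

lemma levelPeriod_dvd_succ (hf : Continuous f) (hx₀ : RegularlyRecurrent f x₀) (j : ℕ) :
    levelPeriod f x₀ j ∣ levelPeriod f x₀ (j + 1) := by
  refine IsPeriodicPt.minimalPeriod_dvd ((isPeriodicPt_image_orbitClosure_iff hf hx₀ _ _).2 ?_)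
  exact orbitClosure_iterate_subset_of_dvd f (Nat.factorial_dvd_factorial j.le_succ) x₀
    ((isPeriodicPt_image_orbitClosure_iff hf hx₀ _ _).1 (isPeriodicPt_minimalPeriod _ _))

lemma tendsto_levelPeriod (hf : Continuous f) (hx₀ : RegularlyRecurrent f x₀)
    (haper : ∀ i, 0 < i → f^[i] x₀ ≠ x₀) : Tendsto (levelPeriod f x₀) atTop atTop := by
  have hmono : Monotone (levelPeriod f x₀) := monotone_nat_of_le_succ fun j =>
    Nat.le_of_dvd (levelPeriod_pos hf hx₀ (j + 1)) (levelPeriod_dvd_succ hf hx₀ j)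
  refine tendsto_atTop_atTop_of_monotone hmono fun B => ?_
  by_contra! hB
  -- `B !` is a common period of all the classes of `x₀`
  refine haper B ! (Nat.factorial_pos B) (hx₀.eq_of_forall_mem_orbitClosure_factorial fun j => ?_)
  exact (isPeriodicPt_image_orbitClosure_iff hf hx₀ _ _).1 (isPeriodicPt_iff_minimalPeriod_dvd.2
    (Nat.dvd_factorial (levelPeriod_pos hf hx₀ j) (hB j).le))

lemma orbitClosure_iterate_mod_levelPeriod (hf : Continuous f) (j i : ℕ) :
    orbitClosure f^[j !] (f^[i % levelPeriod f x₀ j] x₀) = orbitClosure f^[j !] (f^[i] x₀) := by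
  rw [← iterate_image_orbitClosure hf, ← iterate_image_orbitClosure hf, levelPeriod,
    iterate_mod_minimalPeriod_eq]

lemma level_lt (hf : Continuous f) (hx₀ : RegularlyRecurrent f x₀) (j : ℕ) (y : X) :
    level f x₀ j y < levelPeriod f x₀ j :=
  orbitIndex_lt (levelPeriod_pos hf hx₀ j) _

lemma level_eq_iff (hf : Continuous f) (hmin : IsMinimalSet f univ)
    (hrr : ∀ x, RegularlyRecurrent f x) {j i : ℕ} (hi : i < levelPeriod f x₀ j) (y : X) :
    level f x₀ j y = i ↔ y ∈ orbitClosure f^[j !] (f^[i] x₀) := by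
  rw [level, orbitIndex_eq_iff (levelPeriod_pos hf (hrr x₀) j)
    (exists_iterate_image_orbitClosure_eq hf hmin hrr (Nat.factorial_pos j) x₀ y) hi,
    iterate_image_orbitClosure hf, eq_comm, ((hrr _).iterate _).orbitClosure_eq_iff (hf.iterate _)]

lemma level_eq_mod_iff (hf : Continuous f) (hmin : IsMinimalSet f univ)
    (hrr : ∀ x, RegularlyRecurrent f x) (j i : ℕ) (y : X) :
    level f x₀ j y = i % levelPeriod f x₀ j ↔ y ∈ orbitClosure f^[j !] (f^[i] x₀) := by
  rw [level_eq_iff hf hmin hrr (Nat.mod_lt _ (levelPeriod_pos hf (hrr x₀) j)),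
    orbitClosure_iterate_mod_levelPeriod hf]

lemma mem_orbitClosure_level (hf : Continuous f) (hmin : IsMinimalSet f univ)
    (hrr : ∀ x, RegularlyRecurrent f x) (j : ℕ) (y : X) :
    y ∈ orbitClosure f^[j !] (f^[level f x₀ j y] x₀) :=
  (level_eq_iff hf hmin hrr (level_lt hf (hrr x₀) j y) y).1 rfl

lemma level_succ_mod (hf : Continuous f) (hmin : IsMinimalSet f univ)
    (hrr : ∀ x, RegularlyRecurrent f x) (j : ℕ) (y : X) :
    level f x₀ (j + 1) y % levelPeriod f x₀ j = level f x₀ j y :=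
  ((level_eq_mod_iff hf hmin hrr j _ y).2 (orbitClosure_iterate_subset_of_dvd f
    (Nat.factorial_dvd_factorial j.le_succ) _ (mem_orbitClosure_level hf hmin hrr (j + 1) y))).symm

lemma level_apply (hf : Continuous f) (hmin : IsMinimalSet f univ)
    (hrr : ∀ x, RegularlyRecurrent f x) (j : ℕ) (y : X) :
    level f x₀ j (f y) = (level f x₀ j y + 1) % levelPeriod f x₀ j := by
  refine (level_eq_mod_iff hf hmin hrr j _ (f y)).2 ?_
  rw [iterate_succ_apply', ← image_orbitClosure hf (Commute.iterate_self f _)]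
  exact mem_image_of_mem f (mem_orbitClosure_level hf hmin hrr j y)

lemma continuous_level (hf : Continuous f) (hmin : IsMinimalSet f univ)
    (hrr : ∀ x, RegularlyRecurrent f x) (j : ℕ) : Continuous (level f x₀ j) := by
  refine continuous_iff_isClosed.2 fun s _ => ?_
  have hpre : level f x₀ j ⁻¹' s =
      ⋃ i ∈ s ∩ Iio (levelPeriod f x₀ j), orbitClosure f^[j !] (f^[i] x₀) := by
    ext y
    simp only [mem_preimage, mem_iUnion, mem_inter_iff, mem_Iio, exists_prop]
    constructor
    · exact fun hy => ⟨_, ⟨hy, level_lt hf (hrr x₀) j y⟩, mem_orbitClosure_level hf hmin hrr j y⟩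
    · rintro ⟨i, ⟨hi, hlt⟩, hy⟩
      rwa [(level_eq_iff hf hmin hrr hlt y).2 hy]
  rw [hpre]
  exact ((finite_Iio _).inter_of_right s).isClosed_biUnion fun i _ => isClosed_orbitClosure _ _

lemma eq_of_forall_level_eq (hf : Continuous f) (hmin : IsMinimalSet f univ)
    (hrr : ∀ x, RegularlyRecurrent f x) {y z : X} (h : ∀ j, level f x₀ j y = level f x₀ j z) :
    y = z := by
  refine ((hrr y).eq_of_forall_mem_orbitClosure_factorial fun j => ?_).symm
  rw [(((hrr _).iterate _).orbitClosure_eq_iff (hf.iterate _)).2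
    (mem_orbitClosure_level hf hmin hrr j y), h j]
  exact mem_orbitClosure_level hf hmin hrr j z

lemma exists_level_eq (hf : Continuous f) (hmin : IsMinimalSet f univ)
    (hrr : ∀ x, RegularlyRecurrent f x) (b : ℕ → ℕ)
    (hb : ∀ j, b j < levelPeriod f x₀ j ∧ b (j + 1) % levelPeriod f x₀ j = b j) :
    ∃ y, ∀ j, level f x₀ j y = b j := by
  have hnested : ∀ j, orbitClosure f^[(j + 1)!] (f^[b (j + 1)] x₀) ⊆
      orbitClosure f^[j !] (f^[b j] x₀) := fun j => by
    rw [← (hb j).2, orbitClosure_iterate_mod_levelPeriod hf]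
    exact orbitClosure_iterate_subset_of_dvd f (Nat.factorial_dvd_factorial j.le_succ) _
  obtain ⟨y, hy⟩ := IsCompact.nonempty_iInter_of_sequence_nonempty_isCompact_isClosed
    (fun j => orbitClosure f^[j !] (f^[b j] x₀)) hnested
    (fun j => ⟨_, mem_orbitClosure_self _ _⟩) (isClosed_orbitClosure _ _).isCompact
    (fun j => isClosed_orbitClosure _ _)
  refine ⟨y, fun j => ?_⟩
  rw [← Nat.mod_eq_of_lt (hb j).1]
  exact (level_eq_mod_iff hf hmin hrr j _ y).2 (mem_iInter.1 hy j)

end Level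

instance (p : PeriodicStructure) : T2Space p.space :=
  inferInstanceAs (T2Space {x : ℕ → ℕ // ∀ j, x j < p.m j ∧ x (j + 1) % p.m j = x j})

lemma isOdometer_univ_of_conj [TopologicalSpace X] [CompactSpace X] {f : X → X}
    (p : PeriodicStructure) (ψ : X → p.space) (hψ : Continuous ψ) (hbij : Bijective ψ)
    (hconj : ∀ y, ψ (f y) = p.step (ψ y)) : IsOdometer f univ := by
  let E : X ≃ₜ p.space := hψ.homeoOfEquivCompactToT2 (f := Equiv.ofBijective ψ hbij)
  refine ⟨p, E.symm.trans (Homeomorph.Set.univ X).symm, fun z => hbij.1 ?_⟩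
  change ψ (f (E.symm z)) = ψ (E.symm (p.step z))
  rw [hconj]
  exact (congrArg p.step (E.apply_symm_apply z)).trans (E.apply_symm_apply _).symm

lemma IsMinimalSet.isOdometer_univ [MetricSpace X] [CompactSpace X] {f : X → X}
    (hmin : IsMinimalSet f univ) (hf : Continuous f) (hrr : ∀ x, RegularlyRecurrent f x)
    {x₀ : X} (haper : ∀ i, 0 < i → f^[i] x₀ ≠ x₀) : IsOdometer f univ := by
  let p : PeriodicStructure := ⟨levelPeriod f x₀, levelPeriod_pos hf (hrr x₀),
    levelPeriod_dvd_succ hf (hrr x₀), tendsto_levelPeriod hf (hrr x₀) haper⟩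
  let ψ (y : X) : p.space :=
    ⟨fun j => level f x₀ j y, fun j => ⟨level_lt hf (hrr x₀) j y, level_succ_mod hf hmin hrr j y⟩⟩
  refine isOdometer_univ_of_conj p ψ ?_ ⟨fun y z h => ?_, fun b => ?_⟩ fun y => ?_
  · exact (continuous_pi fun j => continuous_level hf hmin hrr j).subtype_mk _
  · exact eq_of_forall_level_eq hf hmin hrr fun j => congrFun (congrArg Subtype.val h) j
  · obtain ⟨y, hy⟩ := exists_level_eq hf hmin hrr b.1 b.2
    exact ⟨y, Subtype.ext (funext hy)⟩
  · exact Subtype.ext (funext fun j => level_apply hf hmin hrr j y)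

end Odometer

theorem minimal_rr_periodic_or_odometer {X : Type*} [MetricSpace X] [CompactSpace X]
    (f : X → X) (hf : Continuous f) (hmin : IsMinimalSet f Set.univ)
    (hrr : ∀ x : X, RegularlyRecurrent f x) :
    IsPeriodicOrbit f Set.univ ∨ IsOdometer f Set.univ := by
  obtain ⟨x₀, -⟩ := hmin.1
  by_cases haper : ∀ i, 0 < i → f^[i] x₀ ≠ x₀
  · exact Or.inr (hmin.isOdometer_univ hf hrr haper)
  · push Not at haper
    obtain ⟨i, hi, hx⟩ := haper
    exact Or.inl (hmin.isPeriodicOrbit_univ hi hx)
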